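/- Let μ be a Borel probability measure on T identified with [0,1) such that S := ∑_{n=1}^∞ |μ̂(n)| < 1/2. Then for every x ∈ (0,1) and all sufficiently small r > 0, (1 - 2S)·2r ≤ μ(B_r(x)) ≤ (1 + 2S)·2r, where B_r(x) = (x-r, x+r). -/

import Mathlib

/-!
Wrap `μ` around the circle `ℝ ⧸ ℤ`. The Fourier coefficients of the wrapped measure are the `μ̂(n)`,
which are absolutely summable, so by uniqueness of Fourier coefficients of finite measures it has
the continuous density `ψ = ∑ μ̂(n) e(n·)`. Since `μ̂(-n) = conj μ̂(n)` and `μ̂(0) = 1`, `ψ` is real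
with `|ψ - 1| ≤ 2S`, hence a genuine positive density. As `μ` lives on `[0, 1)`, `μ (x - r, x + r)`
is the integral of `ψ` over the arc `(x - r, x + r)` once that interval fits inside `[0, 1]`.
-/

open MeasureTheory Filter Topology

noncomputable def fc (μ : Measure ℝ) (n : ℤ) : ℂ :=
  ∫ x, Complex.exp (-(2 * Real.pi * Complex.I * n * x)) ∂μ

open Set ComplexConjugate

namespace ContinuousMap

variable {X : Type*} [TopologicalSpace X] [CompactSpace X] [MeasurableSpace X] [BorelSpace X]

noncomputable def integralCLM (ν : Measure X) [IsFiniteMeasure ν] : C(X, ℂ) →L[ℂ] ℂ :=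
  (L1.integralCLM' ℂ).comp (toLp 1 ν ℂ)

theorem integralCLM_apply (ν : Measure X) [IsFiniteMeasure ν] (f : C(X, ℂ)) :
    integralCLM ν f = ∫ x, f x ∂ν := by
  rw [integralCLM, ContinuousLinearMap.comp_apply, ← L1.integral_eq', L1.integral_eq_integral]
  exact integral_congr_ae (coeFn_toLp ν f)

end ContinuousMap

section WithDensity

variable {X : Type*} [MeasurableSpace X] {ν : Measure X} [SFinite ν] {f : X → ℝ}

theorem ofReal_mul_le_withDensity_ofReal_apply {a : ℝ} (h : ∀ x, a ≤ f x) (s : Set X) :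
    ENNReal.ofReal a * ν s ≤ ν.withDensity (fun x => ENNReal.ofReal (f x)) s := by
  rw [withDensity_apply', ← setLIntegral_const]
  exact lintegral_mono fun x => ENNReal.ofReal_le_ofReal (h x)

theorem withDensity_ofReal_apply_le_ofReal_mul {b : ℝ} (h : ∀ x, f x ≤ b) (s : Set X) :
    ν.withDensity (fun x => ENNReal.ofReal (f x)) s ≤ ENNReal.ofReal b * ν s := by
  rw [withDensity_apply', ← setLIntegral_const]
  exact lintegral_mono fun x => ENNReal.ofReal_le_ofReal (h x)

end WithDensity

theorem norm_tsum_int_sub_zero_le {E : Type*} [NormedAddCommGroup E] [CompleteSpace E]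
    {g : ℤ → E} (hg : Summable fun n => ‖g n‖) :
    ‖∑' n, g n - g 0‖ ≤ ∑' n : ℕ, ‖g (n + 1)‖ + ∑' n : ℕ, ‖g (-(n + 1))‖ := by
  have hnat : Summable fun n : ℕ => ‖g n‖ := hg.comp_injective Nat.cast_injective
  have hneg : Summable fun n : ℕ => ‖g (-(n + 1))‖ :=
    hg.comp_injective fun m n h => by simpa using h
  have hpos : Summable fun n : ℕ => ‖g (n + 1)‖ := by
    simpa using (summable_nat_add_iff 1).mpr hnat
  rw [tsum_of_nat_of_neg_add_one hnat.of_norm hneg.of_norm, hnat.of_norm.tsum_eq_zero_add]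
  simp only [Nat.cast_zero, Nat.cast_add, Nat.cast_one, add_assoc, add_sub_cancel_left]
  exact (norm_add_le _ _).trans
    (add_le_add (norm_tsum_le_tsum_norm hpos) (norm_tsum_le_tsum_norm hneg))

namespace AddCircle

variable {T : ℝ}

theorem measurableSet_image_coe {s : Set ℝ} (hs : IsOpen s) :
    MeasurableSet ((↑) '' s : Set (AddCircle T)) :=
  (QuotientAddGroup.isOpenMap_coe _ hs).measurableSet

variable [Fact (0 < T)]

theorem measure_ext_of_integral_fourier_eq {ν ν' : Measure (AddCircle T)} [IsFiniteMeasure ν]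
    [IsFiniteMeasure ν'] (h : ∀ n, ∫ x, fourier n x ∂ν = ∫ x, fourier n x ∂ν') : ν = ν' := by
  have hCLM : ContinuousMap.integralCLM ν = ContinuousMap.integralCLM ν' := by
    refine ContinuousLinearMap.ext_on
      (Submodule.dense_iff_topologicalClosure_eq_top.mpr span_fourier_closure_eq_top) ?_
    rintro _ ⟨n, rfl⟩
    simp only [ContinuousMap.integralCLM_apply, h]
  refine ext_of_forall_integral_eq_of_IsFiniteMeasure fun f => ?_
  have := congr($hCLM ((⟨Complex.ofReal, Complex.continuous_ofReal⟩ : C(ℝ, ℂ)).comp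
    f.toContinuousMap))
  simp only [ContinuousMap.integralCLM_apply, ContinuousMap.comp_apply, ContinuousMap.coe_mk,
    BoundedContinuousFunction.coe_toContinuousMap] at this
  exact_mod_cast this

theorem fourierCoeff_tsum_smul_fourier {c : ℤ → ℂ} (hc : Summable fun n => ‖c n‖) :
    fourierCoeff (∑' n, c n • fourier n : C(AddCircle T, ℂ)) = c := by
  ext k
  have hsum : Summable fun n => c n • fourier (T := T) n :=
    .of_norm (by simpa only [norm_smul, fourier_norm, mul_one] using hc)
  let L := (ContinuousMap.integralCLM haarAddCircle).comp
    (ContinuousLinearMap.mul ℂ C(AddCircle T, ℂ) (fourier (-k)))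
  have hL : ∀ f, L f = fourierCoeff f k := fun f => by
    simp [L, ContinuousMap.integralCLM_apply, fourierCoeff]
  have := hsum.hasSum.mapL L
  simp only [hL, ContinuousMap.coe_smul, fourierCoeff.const_smul, fourierCoeff_fourier] at this
  refine this.unique ?_
  convert hasSum_single k (f := fun n => c n • (Pi.single n (1 : ℂ) : ℤ → ℂ) k) ?_ using 1
  · simp
  · intro n hn
    simp [hn.symm]

theorem injOn_coe_Ioc (t : ℝ) : InjOn ((↑) : ℝ → AddCircle T) (Ioc t (t + T)) :=
  fun _ hx _ hy => (coe_eq_coe_iff_of_mem_Ioc hx hy).mp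

theorem injOn_coe_Ico (t : ℝ) : InjOn ((↑) : ℝ → AddCircle T) (Ico t (t + T)) :=
  fun _ hx _ hy => (coe_eq_coe_iff_of_mem_Ico hx hy).mp

theorem volume_image_coe {s : Set ℝ} (hs : IsOpen s) {t : ℝ} (hst : s ⊆ Ioc t (t + T)) :
    volume ((↑) '' s : Set (AddCircle T)) = volume s := by
  rw [add_projection_respects_measure T t (measurableSet_image_coe hs),
    (injOn_coe_Ioc t).preimage_image_inter hst]

theorem map_coe_apply_image {μ : Measure ℝ} {t : ℝ} (hμ : μ (Ico t (t + T))ᶜ = 0) {s : Set ℝ}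
    (hs : IsOpen s) (hst : s ⊆ Ico t (t + T)) :
    μ.map ((↑) : ℝ → AddCircle T) ((↑) '' s) = μ s := by
  rw [Measure.map_apply AddCircle.measurable_mk' (measurableSet_image_coe hs),
    ← measure_inter_conull hμ, (injOn_coe_Ico t).preimage_image_inter hst]

theorem haarAddCircle_eq_volume_of_period_one :
    (haarAddCircle : Measure (AddCircle (1 : ℝ))) = volume := by
  rw [volume_eq_smul_haarAddCircle, ENNReal.ofReal_one, one_smul]

end AddCircle

theorem fc_zero (μ : Measure ℝ) [IsProbabilityMeasure μ] : fc μ 0 = 1 := by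
  simp [fc]

theorem fc_neg (μ : Measure ℝ) (n : ℤ) : fc μ (-n) = conj (fc μ n) := by
  rw [fc, fc, ← integral_conj]
  congr 1 with x
  rw [← Complex.exp_conj]
  simp [map_ofNat]

theorem norm_fc_neg (μ : Measure ℝ) (n : ℤ) : ‖fc μ (-n)‖ = ‖fc μ n‖ := by
  rw [fc_neg, Complex.norm_conj]

theorem integral_fourier_map_coe (μ : Measure ℝ) (n : ℤ) :
    ∫ x, fourier n x ∂(μ.map ((↑) : ℝ → AddCircle (1 : ℝ))) = fc μ (-n) := by
  rw [integral_map AddCircle.measurable_mk'.aemeasurable (map_continuous _).aestronglyMeasurable,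
    fc]
  congr 1 with x
  rw [fourier_coe_apply]
  push_cast
  ring_nf

noncomputable def fcDensity (μ : Measure ℝ) : C(AddCircle (1 : ℝ), ℂ) :=
  ∑' n, fc μ n • fourier n

section Density

variable {μ : Measure ℝ} (hsum : Summable fun n : ℕ => ‖fc μ (n + 1)‖)
include hsum

theorem summable_norm_fc : Summable fun n : ℤ => ‖fc μ n‖ := by
  have hsum' : Summable fun n : ℕ => ‖fc μ ((n : ℤ) + 1)‖ := by exact_mod_cast hsum
  refine .of_nat_of_neg_add_one ((summable_nat_add_iff 1).mp hsum') ?_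
  simpa only [norm_fc_neg] using hsum'

theorem fourierCoeff_fcDensity : fourierCoeff (fcDensity μ) = fc μ :=
  AddCircle.fourierCoeff_tsum_smul_fourier (summable_norm_fc hsum)

theorem hasSum_fcDensity_apply (x : AddCircle (1 : ℝ)) :
    HasSum (fun n => fc μ n • fourier n x) (fcDensity μ x) := by
  have := has_pointwise_sum_fourier_series_of_summable (f := fcDensity μ)
    (by simpa only [fourierCoeff_fcDensity hsum] using (summable_norm_fc hsum).of_norm) x
  rwa [fourierCoeff_fcDensity hsum] at this

theorem conj_fcDensity_apply (x : AddCircle (1 : ℝ)) : conj (fcDensity μ x) = fcDensity μ x := by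
  have hconj : HasSum (fun n => fc μ n • fourier n x) (conj (fcDensity μ x)) := by
    rw [← (Equiv.neg ℤ).hasSum_iff]
    convert Complex.hasSum_conj'.mpr (hasSum_fcDensity_apply hsum x) using 1
    ext n
    simp only [Function.comp_apply, Equiv.neg_apply, fc_neg, fourier_neg, smul_eq_mul, map_mul]
  exact hconj.unique (hasSum_fcDensity_apply hsum x)

theorem abs_re_fcDensity_sub_one_le [IsProbabilityMeasure μ] (x : AddCircle (1 : ℝ)) :
    |(fcDensity μ x).re - 1| ≤ 2 * ∑' n : ℕ, ‖fc μ (n + 1)‖ := by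
  have hnorm : ∀ n, ‖fc μ n • fourier n x‖ = ‖fc μ n‖ := fun n => by
    rw [norm_smul, show ‖fourier n x‖ = 1 from Circle.norm_coe _, mul_one]
  have h := norm_tsum_int_sub_zero_le (g := fun n => fc μ n • fourier n x)
    (by simpa only [hnorm] using summable_norm_fc hsum)
  simp only [hnorm, norm_fc_neg, fc_zero, fourier_zero, one_smul,
    (hasSum_fcDensity_apply hsum x).tsum_eq] at h
  have hre := Complex.abs_re_le_norm (fcDensity μ x - 1)
  rw [Complex.sub_re, Complex.one_re] at hre
  linarith

theorem map_coe_eq_withDensity_fcDensity [IsProbabilityMeasure μ]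
    (hlt : ∑' n : ℕ, ‖fc μ (n + 1)‖ < 1 / 2) :
    μ.map ((↑) : ℝ → AddCircle (1 : ℝ))
      = volume.withDensity fun x => ENNReal.ofReal (fcDensity μ x).re := by
  have hρ_cont : Continuous fun x => (fcDensity μ x).re :=
    Complex.continuous_re.comp (fcDensity μ).continuous
  have hρ_nonneg : ∀ x, 0 ≤ (fcDensity μ x).re := fun x => by
    linarith [abs_le.mp (abs_re_fcDensity_sub_one_le hsum x)]
  have hρ_real : ∀ x, (((fcDensity μ x).re : ℝ) : ℂ) = fcDensity μ x := fun x =>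
    Complex.conj_eq_iff_re.mp (conj_fcDensity_apply hsum x)
  have : IsProbabilityMeasure (μ.map ((↑) : ℝ → AddCircle (1 : ℝ))) :=
    Measure.isProbabilityMeasure_map AddCircle.measurable_mk'.aemeasurable
  have := isFiniteMeasure_withDensity_ofReal
    (hρ_cont.integrable_of_hasCompactSupport (.of_compactSpace _) (μ := volume)).2
  refine AddCircle.measure_ext_of_integral_fourier_eq fun n => ?_
  rw [integral_fourier_map_coe, integral_withDensity_eq_integral_toReal_smul
    hρ_cont.measurable.ennreal_ofReal (ae_of_all _ fun _ => ENNReal.ofReal_lt_top),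
    ← fourierCoeff_fcDensity hsum, fourierCoeff, neg_neg,
    AddCircle.haarAddCircle_eq_volume_of_period_one]
  congr 1 with x
  rw [ENNReal.toReal_ofReal (hρ_nonneg x), Complex.real_smul, hρ_real, smul_eq_mul, mul_comm]

theorem measureReal_Ioo_mem_Icc [IsProbabilityMeasure μ] (hsupp : μ (Ico 0 1)ᶜ = 0)
    (hlt : ∑' n : ℕ, ‖fc μ (n + 1)‖ < 1 / 2) {a b : ℝ} (ha : 0 ≤ a) (hab : a ≤ b) (hb : b ≤ 1) :
    μ.real (Ioo a b) ∈ Icc ((1 - 2 * ∑' n : ℕ, ‖fc μ (n + 1)‖) * (b - a))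
      ((1 + 2 * ∑' n : ℕ, ‖fc μ (n + 1)‖) * (b - a)) := by
  set S := ∑' n : ℕ, ‖fc μ (n + 1)‖
  have hS : 0 ≤ S := tsum_nonneg fun _ => norm_nonneg _
  have hρ := fun x => abs_le.mp (abs_re_fcDensity_sub_one_le hsum (μ := μ) x)
  have hμ : μ (Ioo a b) = (volume.withDensity fun x => ENNReal.ofReal (fcDensity μ x).re)
      ((↑) '' Ioo a b) := by
    rw [← map_coe_eq_withDensity_fcDensity hsum hlt, AddCircle.map_coe_apply_image (t := 0)
      (by rwa [zero_add]) isOpen_Ioo fun y hy => ⟨by linarith [hy.1], by linarith [hy.2]⟩]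
  have hvol : volume ((↑) '' Ioo a b : Set (AddCircle (1 : ℝ))) = ENNReal.ofReal (b - a) := by
    rw [AddCircle.volume_image_coe isOpen_Ioo (t := 0)
      fun y hy => ⟨by linarith [hy.1], by linarith [hy.2]⟩, Real.volume_Ioo]
  constructor
  · rw [measureReal_def, ← ENNReal.ofReal_le_iff_le_toReal (measure_ne_top _ _),
      ENNReal.ofReal_mul (by linarith), hμ, ← hvol]
    exact ofReal_mul_le_withDensity_ofReal_apply (fun x => by linarith [(hρ x).1]) _
  · refine ENNReal.toReal_le_of_le_ofReal (mul_nonneg (by linarith) (sub_nonneg.mpr hab)) ?_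
    rw [ENNReal.ofReal_mul (by linarith), hμ, ← hvol]
    exact withDensity_ofReal_apply_le_ofReal_mul (fun x => by linarith [(hρ x).2]) _

end Density

theorem stmt14 (μ : Measure ℝ) [IsProbabilityMeasure μ]
    (hsupp : μ (Set.Ico (0:ℝ) 1)ᶜ = 0)
    (hsum : Summable (fun n : ℕ => ‖fc μ (n+1)‖))
    (hlt : (∑' n : ℕ, ‖fc μ (n+1)‖) < 1/2)
    (x : ℝ) (hx : x ∈ Set.Ioo (0:ℝ) 1) :
    ∀ᶠ r in 𝓝[>] (0:ℝ),
      (1 - 2 * ∑' n : ℕ, ‖fc μ (n+1)‖) * (2 * r)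
          ≤ (μ (Set.Ioo (x - r) (x + r))).toReal ∧
      (μ (Set.Ioo (x - r) (x + r))).toReal
          ≤ (1 + 2 * ∑' n : ℕ, ‖fc μ (n+1)‖) * (2 * r) := by
  filter_upwards [Ioo_mem_nhdsGT (lt_min hx.1 (sub_pos.mpr hx.2))] with r ⟨hr, hr_min⟩
  obtain ⟨hr_x, hr_one_sub_x⟩ := lt_min_iff.mp hr_min
  have h := measureReal_Ioo_mem_Icc hsum hsupp hlt (a := x - r) (b := x + r)
    (by linarith) (by linarith) (by linarith)
  rwa [show x + r - (x - r) = 2 * r by ring] at h
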